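/- arXiv:1908.09036 — 4 statements merged into one kernel-verified Lean document; each statement's English description precedes it below -/
import Mathlib

section
/- Let h ≥ 1, E(u) = u+p, c_0 = p, and define N_∇ = -uλ d/du on the ring O_F of power series over F converging on the open unit disc, where λ = Π_{n≥0} φ^n(E/c_0). Let C_0 = [[0, -1],[E^h, 0]] and B = [[h u λ_+ λ_-', 0],[0, h u λ_- λ_+']] (λ_± as above, ' = d/du). Then the monodromy relation N_∇(C_0) + B C_0 = p(E/c_0) C_0 φ(B) holds, where N_∇ and φ are applied entrywise. -/
open PowerSeries Filter

noncomputable section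

/-- `Hge m vp v f` says the Gauss valuation `v_R(f) = min_i (i + m * vp (a_i))` is `≥ v`. -/
def Hge {F : Type*} [Field F] (m : ℝ) (vp : F → ℝ) (v : ℝ) (f : PowerSeries F) : Prop :=
  ∀ i : ℕ, (PowerSeries.coeff i) f ≠ 0 → v ≤ (i : ℝ) + m * vp ((PowerSeries.coeff i) f)

/-- `vReq m vp f v` says `v_R(f) = v`: it is a lower bound and it is attained. -/
def vReq {F : Type*} [Field F] (m : ℝ) (vp : F → ℝ) (f : PowerSeries F) (v : ℝ) : Prop :=
  Hge m vp v f ∧ ∃ i : ℕ, (PowerSeries.coeff i) f ≠ 0 ∧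
    (i : ℝ) + m * vp ((PowerSeries.coeff i) f) = v

/-- membership in `R = O_{F,[0,p^{-1/m}]}`: `i + m * vp (a_i) → ∞`. -/
def MemR {F : Type*} [Field F] (m : ℝ) (vp : F → ℝ) (f : PowerSeries F) : Prop :=
  ∀ N : ℝ, ∀ᶠ i : ℕ in Filter.atTop,
    (PowerSeries.coeff i) f = 0 ∨ N ≤ (i : ℝ) + m * vp ((PowerSeries.coeff i) f)

/-- The Frobenius `φ` on power series: substitution `u ↦ u^p`. -/
def phiF {F : Type*} [Field F] (p : ℕ) (f : PowerSeries F) : PowerSeries F :=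
  PowerSeries.mk fun n => if p ∣ n then (PowerSeries.coeff (n / p)) f else 0

/-- Formal derivative `d/du` of a power series. -/
def dWrt {F : Type*} [Field F] (f : PowerSeries F) : PowerSeries F :=
  PowerSeries.mk fun n => ((n : F) + 1) * (PowerSeries.coeff (n + 1)) f

/-!
Write `φ` for the Frobenius `u ↦ u ^ p`, which is Mathlib's `PowerSeries.expand p`. A power series
with prescribed constant term solving `f = a * φᵏ f` (`k ≥ 1`) is unique: the difference `d` of two
solutions would satisfy `ord d ≥ pᵏ ord d` with `ord d ≥ 1`. Comparing the functional equations
gives `λ₋ = φ λ₊` and `λ = λ₊ λ₋`, so `p λ₊ = E φ(λ₋)`. The chain rule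
`(φ f)' = p u^(p-1) φ(f')` then turns the off-diagonal entries of the relation into this identity
and its derivative.
-/

theorem phiF_eq_expand {F : Type*} [Field F] {p : ℕ} (hp : p ≠ 0) :
    (phiF p : F⟦X⟧ → F⟦X⟧) = expand p hp := by
  ext f n
  rw [coeff_expand, phiF, coeff_mk]

theorem dWrt_eq_derivative {F : Type*} [Field F] : (dWrt : F⟦X⟧ → F⟦X⟧) = d⁄dX F := by
  ext f n
  rw [dWrt, coeff_mk, coeff_derivative]
  ring

namespace PowerSeries

theorem natCast_mul_C_inv {F : Type*} [Field F] {p : ℕ} (hpF : (p : F) ≠ 0) :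
    (p : F⟦X⟧) * C (p : F)⁻¹ = 1 := by
  rw [← map_natCast C, ← map_mul, mul_inv_cancel₀ hpF, map_one]

variable {R : Type*} [CommRing R] {p : ℕ}

theorem derivative_expand (hp : p ≠ 0) (f : R⟦X⟧) :
    d⁄dX R (expand p hp f) = expand p hp (d⁄dX R f) * ((p : R⟦X⟧) * X ^ (p - 1)) := by
  simp only [expand_apply, derivative_subst (HasSubst.X_pow hp), derivative_pow, derivative_X,
    mul_one]

theorem expand_expand (hp : p ≠ 0) (f : R⟦X⟧) :
    expand p hp (expand p hp f) = expand (p * p) (mul_ne_zero hp hp) f :=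
  (expand_mul p hp p hp f).symm

theorem eq_zero_of_eq_mul_expand (hp : 1 < p) {A f : R⟦X⟧}
    (hf : f = A * expand p (Nat.ne_zero_of_lt hp) f) (h0 : constantCoeff f = 0) : f = 0 := by
  by_contra hne
  obtain ⟨n, hn⟩ := ENat.ne_top_iff_exists.mp (order_eq_top.not.mpr hne)
  have hn0 : n ≠ 0 := by
    rintro rfl
    exact order_ne_zero_iff_constCoeff_eq_zero.mpr h0 hn.symm
  have hle : ((p * n : ℕ) : ℕ∞) ≤ n :=
    calc ((p * n : ℕ) : ℕ∞) = p • f.order := by rw [← hn]; simp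
      _ ≤ A.order + (expand p (Nat.ne_zero_of_lt hp) f).order := by
        rw [order_expand]
        exact le_add_self
      _ ≤ f.order := by
        conv_rhs => rw [hf]
        exact le_order_mul _ _
      _ = n := hn.symm
  exact (Nat.cast_le.mp hle).not_gt (lt_mul_left (Nat.pos_of_ne_zero hn0) hp)

theorem eq_of_eq_mul_expand (hp : 1 < p) {A f g : R⟦X⟧}
    (hf : f = A * expand p (Nat.ne_zero_of_lt hp) f)
    (hg : g = A * expand p (Nat.ne_zero_of_lt hp) g)
    (h0 : constantCoeff f = constantCoeff g) : f = g :=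
  sub_eq_zero.mp <| eq_zero_of_eq_mul_expand hp (by rw [map_sub, mul_sub, ← hf, ← hg])
    (by rw [map_sub, h0, sub_self])

theorem eq_expand_of_eq_mul_expand_expand (hp : 1 < p) {a f g : R⟦X⟧}
    (hf : f = a * expand p (Nat.ne_zero_of_lt hp) (expand p (Nat.ne_zero_of_lt hp) f))
    (hg : g = expand p (Nat.ne_zero_of_lt hp) a *
      expand p (Nat.ne_zero_of_lt hp) (expand p (Nat.ne_zero_of_lt hp) g))
    (h0 : constantCoeff g = constantCoeff f) :
    g = expand p (Nat.ne_zero_of_lt hp) f := by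
  refine eq_of_eq_mul_expand (one_lt_mul'' hp hp) (A := expand p (Nat.ne_zero_of_lt hp) a)
    ?_ ?_ ?_
  · rwa [← expand_expand]
  · conv_lhs => rw [hf]
    rw [map_mul, expand_expand]
  · rw [h0, constantCoeff_expand]

theorem eq_mul_of_eq_mul_expand (hp : 1 < p) {a l f g : R⟦X⟧}
    (hl : l = a * expand p (Nat.ne_zero_of_lt hp) l)
    (hf : f = a * expand p (Nat.ne_zero_of_lt hp) (expand p (Nat.ne_zero_of_lt hp) f))
    (hg : g = expand p (Nat.ne_zero_of_lt hp) a *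
      expand p (Nat.ne_zero_of_lt hp) (expand p (Nat.ne_zero_of_lt hp) g))
    (h0 : constantCoeff l = constantCoeff f * constantCoeff g) :
    l = f * g := by
  refine eq_of_eq_mul_expand (one_lt_mul'' hp hp) (A := a * expand p (Nat.ne_zero_of_lt hp) a)
    ?_ ?_ (by rw [h0, map_mul])
  · conv_lhs => rw [hl, hl]
    rw [map_mul, expand_expand]
    ring
  · conv_lhs => rw [hf, hg]
    rw [map_mul, expand_expand, expand_expand]
    ring

theorem monodromy_entry_zero_one (hp : p ≠ 0) (h : ℕ) {E f : R⟦X⟧}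
    (hf : (p : R⟦X⟧) * f = E * expand p hp (expand p hp f)) :
    (h : R⟦X⟧) * X * f * d⁄dX R (expand p hp f) =
      E * expand p hp ((h : R⟦X⟧) * X * expand p hp f * d⁄dX R f) := by
  rw [derivative_expand, map_mul, map_mul, map_mul, map_natCast, expand_X, ← mul_pow_sub_one hp]
  linear_combination ((h : R⟦X⟧) * X * X ^ (p - 1) * expand p hp (d⁄dX R f)) * hf

theorem monodromy_entry_one_zero [IsDomain R] (hp : p ≠ 0) (hpR : (p : R) ≠ 0) (h : ℕ)
    {E f : R⟦X⟧} (hE : d⁄dX R E = 1)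
    (hf : (p : R⟦X⟧) * f = E * expand p hp (expand p hp f)) :
    -(X * (f * expand p hp f) * d⁄dX R (E ^ h)) +
        (h : R⟦X⟧) * X * expand p hp f * d⁄dX R f * E ^ h =
      E * (E ^ h * expand p hp ((h : R⟦X⟧) * X * f * d⁄dX R (expand p hp f))) := by
  have hpX : (p : R⟦X⟧) ≠ 0 := by
    rw [← map_natCast C]
    exact (map_ne_zero_iff C C_injective).mpr hpR
  have hdf : (p : R⟦X⟧) * d⁄dX R f =
      expand p hp (expand p hp f) +
        E * (expand p hp (d⁄dX R (expand p hp f)) * ((p : R⟦X⟧) * X ^ (p - 1))) := by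
    have hd := congrArg (d⁄dX R) hf
    rw [Derivation.leibniz, Derivation.leibniz, Derivation.map_natCast, hE,
      derivative_expand hp (expand p hp f)] at hd
    linear_combination hd
  have hEh : (h : R⟦X⟧) * E ^ h = h * E ^ (h - 1) * E := by
    rcases h with _ | n
    · simp
    · rw [Nat.add_sub_cancel, pow_succ, mul_assoc]
  apply mul_left_cancel₀ hpX
  rw [derivative_pow, hE, map_mul, map_mul, map_mul, map_natCast, expand_X, ← mul_pow_sub_one hp]
  linear_combination (-(h : R⟦X⟧) * X * E ^ (h - 1) * expand p hp f) * hf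
    + ((h : R⟦X⟧) * X * E ^ h * expand p hp f) * hdf
    + (X * expand p hp f * expand p hp (expand p hp f)) * hEh

end PowerSeries

theorem stmt_5_general {F : Type*} [Field F] [CharZero F] (p : ℕ) (hp : p.Prime)
    (h : ℕ)
    (E lam lamP lamM : PowerSeries F)
    (hE : E = PowerSeries.X + PowerSeries.C (p : F))
    (hlam0 : PowerSeries.constantCoeff lam = 1)
    (hlam : lam = E * PowerSeries.C (p : F)⁻¹ * phiF p lam)
    (hlamP0 : PowerSeries.constantCoeff lamP = 1)
    (hlamP : lamP = E * PowerSeries.C (p : F)⁻¹ * phiF p (phiF p lamP))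
    (hlamM0 : PowerSeries.constantCoeff lamM = 1)
    (hlamM : lamM = phiF p E * PowerSeries.C (p : F)⁻¹ * phiF p (phiF p lamM)) :
    (!![0, -1; E ^ h, 0] : Matrix (Fin 2) (Fin 2) (PowerSeries F)).map
        (fun f => -(PowerSeries.X * lam * dWrt f)) +
      (!![(h : PowerSeries F) * PowerSeries.X * lamP * dWrt lamM, 0;
          0, (h : PowerSeries F) * PowerSeries.X * lamM * dWrt lamP] :
        Matrix (Fin 2) (Fin 2) (PowerSeries F)) * !![0, -1; E ^ h, 0] =
    ((p : PowerSeries F) * E * PowerSeries.C (p : F)⁻¹) •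
      ((!![0, -1; E ^ h, 0] : Matrix (Fin 2) (Fin 2) (PowerSeries F)) *
        (!![(h : PowerSeries F) * PowerSeries.X * lamP * dWrt lamM, 0;
            0, (h : PowerSeries F) * PowerSeries.X * lamM * dWrt lamP]).map (phiF p)) := by
  have hp0 := hp.ne_zero
  have hpF : (p : F) ≠ 0 := Nat.cast_ne_zero.mpr hp0
  simp only [phiF_eq_expand hp0, dWrt_eq_derivative] at hlam hlamP hlamM ⊢
  have hM : lamM = expand p hp0 lamP :=
    eq_expand_of_eq_mul_expand_expand hp.one_lt hlamP (by rwa [map_mul, expand_C])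
      (by rw [hlamM0, hlamP0])
  have hL : lam = lamP * lamM :=
    eq_mul_of_eq_mul_expand hp.one_lt hlam hlamP (by rwa [map_mul, expand_C])
      (by rw [hlam0, hlamP0, hlamM0, mul_one])
  have hE' : d⁄dX F E = 1 := by simp [hE]
  have hP : (p : F⟦X⟧) * lamP = E * expand p hp0 (expand p hp0 lamP) := by
    conv_lhs => rw [hlamP]
    linear_combination (E * expand p hp0 (expand p hp0 lamP)) * natCast_mul_C_inv hpF
  have hscalar : (p : F⟦X⟧) * E * C (p : F)⁻¹ = E := by
    linear_combination E * natCast_mul_C_inv hpF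
  subst hM hL
  refine Matrix.ext fun i j => ?_
  fin_cases i <;> fin_cases j <;> simp [Matrix.vecMul, dotProduct, Fin.sum_univ_two, hscalar]
  · simpa using monodromy_entry_zero_one hp0 h hP
  · simpa using monodromy_entry_one_zero hp0 hpF h hE' hP

/-- with `C₀ = [[0,-1],[E^h,0]]` and
`B = [[h u λ_+ λ_-', 0],[0, h u λ_- λ_+']]`, the monodromy relation
`N_∇(C₀) + B C₀ = p (E/c₀) C₀ φ(B)` holds, where `N_∇(f) = -u λ f'`. -/
theorem stmt_5 {F : Type*} [Field F] [CharZero F] (p : ℕ) (hp : p.Prime)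
    (h : ℕ) (hh : 1 ≤ h)
    (E lam lamP lamM : PowerSeries F)
    (hE : E = PowerSeries.X + PowerSeries.C (p : F))
    (hlam0 : PowerSeries.constantCoeff lam = 1)
    (hlam : lam = E * PowerSeries.C (p : F)⁻¹ * phiF p lam)
    (hlamP0 : PowerSeries.constantCoeff lamP = 1)
    (hlamP : lamP = E * PowerSeries.C (p : F)⁻¹ * phiF p (phiF p lamP))
    (hlamM0 : PowerSeries.constantCoeff lamM = 1)
    (hlamM : lamM = phiF p E * PowerSeries.C (p : F)⁻¹ * phiF p (phiF p lamM)) :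
    (!![0, -1; E ^ h, 0] : Matrix (Fin 2) (Fin 2) (PowerSeries F)).map
        (fun f => -(PowerSeries.X * lam * dWrt f)) +
      (!![(h : PowerSeries F) * PowerSeries.X * lamP * dWrt lamM, 0;
          0, (h : PowerSeries F) * PowerSeries.X * lamM * dWrt lamP] :
        Matrix (Fin 2) (Fin 2) (PowerSeries F)) * !![0, -1; E ^ h, 0] =
    ((p : PowerSeries F) * E * PowerSeries.C (p : F)⁻¹) •
      ((!![0, -1; E ^ h, 0] : Matrix (Fin 2) (Fin 2) (PowerSeries F)) *
        (!![(h : PowerSeries F) * PowerSeries.X * lamP * dWrt lamM, 0;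
            0, (h : PowerSeries F) * PowerSeries.X * lamM * dWrt lamP]).map (phiF p)) :=
  stmt_5_general p hp h E lam lamP lamM hE hlam0 hlam hlamP0 hlamP hlamM0 hlamM
end
end

section
/- Let p be a prime, h ≥ 1, F/Q_p finite with maximal ideal m_F. Let λ_- = Π_{i≥0}(1 + u^{p^{1+2i}}/p), λ_{++} = Π_{i≥1}(1 + u^{p^{2i}}/p) in R = O_{F,[0,p^{-1/p}]}. If v_p(a_p) > ⌊h/p⌋, then the degree-≤ h truncation of a_p(λ_- /λ_{++})^h lies in m_F[u]. -/
open PowerSeries Filter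

noncomputable section

/-!
Both `λ`'s lie in `O_F[[u^p/p]]`: writing the functional equation `λ = (1 + u^e/p) φ²(λ)`
(with `e = p` for `λ_-` and `e = p²` for `λ_{++}`) coefficientwise shows by induction that the
coefficient of `u^n` vanishes unless `p ∣ n` and otherwise has valuation `≥ -n/p`. This property
is stable under products and under inversion of series with constant term `1`, so
`(λ_- / λ_{++})^h = Σ c_k (u^p/p)^k` with integral `c_k`. A term of degree `pk ≤ h` has
`k ≤ ⌊h/p⌋ < v_p(a_p)`, hence `a_p c_k p^{-k} ∈ m_F`.
-/

section SeriesInXpDivP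

variable {F : Type*} [Field F]

/-- `x` may be the coefficient of `X^n` in a series in `X^p/p` with `vp`-integral coefficients:
`n = p k` and `vp x ≥ -k`. -/
def IsXpDivPCoeff (p : ℕ) (vp : F → ℝ) (n : ℕ) (x : F) : Prop :=
  x ≠ 0 → p ∣ n ∧ -((n : ℝ) / p) ≤ vp x

def IsXpDivPSeries (p : ℕ) (vp : F → ℝ) (f : PowerSeries F) : Prop :=
  ∀ n, IsXpDivPCoeff p vp n (coeff n f)

variable {p : ℕ} {vp : F → ℝ}

namespace IsXpDivPCoeff

lemma zero (n : ℕ) : IsXpDivPCoeff p vp n 0 := fun h => (h rfl).elim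

lemma one (hvp_one : vp 1 = 0) : IsXpDivPCoeff p vp 0 (1 : F) :=
  fun _ => ⟨dvd_zero p, by simp [hvp_one]⟩

lemma add (hvp_add : ∀ x y : F, x ≠ 0 → y ≠ 0 → x + y ≠ 0 → min (vp x) (vp y) ≤ vp (x + y))
    {n : ℕ} {x y : F} (hx : IsXpDivPCoeff p vp n x) (hy : IsXpDivPCoeff p vp n y) :
    IsXpDivPCoeff p vp n (x + y) := by
  intro hxy
  rcases eq_or_ne x 0 with rfl | hx0
  · rw [zero_add] at hxy ⊢
    exact hy hxy
  rcases eq_or_ne y 0 with rfl | hy0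
  · rw [add_zero] at hxy ⊢
    exact hx hxy
  exact ⟨(hx hx0).1, (le_min (hx hx0).2 (hy hy0).2).trans (hvp_add x y hx0 hy0 hxy)⟩

lemma sum (hvp_add : ∀ x y : F, x ≠ 0 → y ≠ 0 → x + y ≠ 0 → min (vp x) (vp y) ≤ vp (x + y))
    {ι : Type*} {s : Finset ι} {g : ι → F} {n : ℕ} (hg : ∀ i ∈ s, IsXpDivPCoeff p vp n (g i)) :
    IsXpDivPCoeff p vp n (∑ i ∈ s, g i) :=
  Finset.sum_induction g _ (fun _ _ => add hvp_add) (zero n) hg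

lemma mul (hvp_mul : ∀ x y : F, x ≠ 0 → y ≠ 0 → vp (x * y) = vp x + vp y)
    {a b : ℕ} {x y : F} (hx : IsXpDivPCoeff p vp a x) (hy : IsXpDivPCoeff p vp b y) :
    IsXpDivPCoeff p vp (a + b) (x * y) := by
  intro hxy
  obtain ⟨hpa, hxv⟩ := hx (left_ne_zero_of_mul hxy)
  obtain ⟨hpb, hyv⟩ := hy (right_ne_zero_of_mul hxy)
  refine ⟨dvd_add hpa hpb, ?_⟩
  rw [hvp_mul x y (left_ne_zero_of_mul hxy) (right_ne_zero_of_mul hxy)]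
  push_cast
  rw [add_div]
  linarith

lemma neg (hvp_one : vp 1 = 0) (hvp_mul : ∀ x y : F, x ≠ 0 → y ≠ 0 → vp (x * y) = vp x + vp y)
    {n : ℕ} {x : F} (hx : IsXpDivPCoeff p vp n x) : IsXpDivPCoeff p vp n (-x) := by
  intro hnx
  have hx0 : x ≠ 0 := neg_ne_zero.mp hnx
  have hvp_neg_one : vp (-1 : F) = 0 := by
    have := hvp_mul (-1) (-1) (by norm_num) (by norm_num)
    rw [neg_mul_neg, one_mul, hvp_one] at this
    linarith
  rw [neg_eq_neg_one_mul x, hvp_mul _ _ (by norm_num) hx0, hvp_neg_one, zero_add]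
  exact hx hx0

/-- Dividing by `p` costs `1` in valuation; the shift by `e ≥ p` recovers it in the bound. -/
lemma inv_natCast_mul (hvp_one : vp 1 = 0) (hvp_p : vp (p : F) = 1)
    (hvp_mul : ∀ x y : F, x ≠ 0 → y ≠ 0 → vp (x * y) = vp x + vp y)
    {e k : ℕ} (hpe : p ∣ e) (hpe_le : p ≤ e) {x : F} (hx : IsXpDivPCoeff p vp k x) :
    IsXpDivPCoeff p vp (k + e) ((p : F)⁻¹ * x) := by
  intro hpx
  have hpinv : (p : F)⁻¹ ≠ 0 := left_ne_zero_of_mul hpx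
  have hx0 : x ≠ 0 := right_ne_zero_of_mul hpx
  have hpF : (p : F) ≠ 0 := fun h => hpinv (by rw [h, inv_zero])
  have hvp_inv : vp (p : F)⁻¹ = -1 := by
    have := hvp_mul _ _ hpF hpinv
    rw [mul_inv_cancel₀ hpF, hvp_one, hvp_p] at this
    linarith
  obtain ⟨hpk, hxv⟩ := hx hx0
  refine ⟨dvd_add hpk hpe, ?_⟩
  rw [hvp_mul _ _ hpinv hx0, hvp_inv]
  have hp0 : (0 : ℝ) < p := by exact_mod_cast Nat.pos_of_ne_zero (by rintro rfl; simp at hpF)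
  have hpe' : (p : ℝ) ≤ e := by exact_mod_cast hpe_le
  calc -(((k + e : ℕ) : ℝ) / p) ≤ -((k + p : ℝ) / p) := by push_cast; gcongr
    _ = -1 + -((k : ℝ) / p) := by field_simp; ring
    _ ≤ -1 + vp x := by linarith

lemma coeff_phiF_phiF {f : PowerSeries F} {n : ℕ}
    (hf : ∀ m, m * p * p = n → IsXpDivPCoeff p vp m (coeff m f)) :
    IsXpDivPCoeff p vp n (coeff n (phiF p (phiF p f))) := by
  intro hn
  simp only [phiF, coeff_mk] at hn ⊢
  by_cases hpn : p ∣ n ∧ p ∣ n / p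
  · rw [if_pos hpn.1, if_pos hpn.2] at hn ⊢
    have hm : n / p / p * p * p = n := by
      rw [Nat.div_mul_cancel hpn.2, Nat.div_mul_cancel hpn.1]
    refine ⟨hpn.1, le_trans ?_ (hf _ hm hn).2⟩
    have : ((n / p / p : ℕ) : ℝ) ≤ n := by
      exact_mod_cast (Nat.div_le_self _ _).trans (Nat.div_le_self _ _)
    gcongr
  · simp_all

end IsXpDivPCoeff

namespace IsXpDivPSeries

lemma one (hvp_one : vp 1 = 0) : IsXpDivPSeries p vp (1 : PowerSeries F) := fun n => by
  rw [coeff_one]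
  split_ifs with hn
  · exact hn ▸ IsXpDivPCoeff.one hvp_one
  · exact IsXpDivPCoeff.zero n

lemma mul (hvp_mul : ∀ x y : F, x ≠ 0 → y ≠ 0 → vp (x * y) = vp x + vp y)
    (hvp_add : ∀ x y : F, x ≠ 0 → y ≠ 0 → x + y ≠ 0 → min (vp x) (vp y) ≤ vp (x + y))
    {f g : PowerSeries F} (hf : IsXpDivPSeries p vp f) (hg : IsXpDivPSeries p vp g) :
    IsXpDivPSeries p vp (f * g) := fun n => by
  rw [coeff_mul]
  refine IsXpDivPCoeff.sum hvp_add fun x hx => ?_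
  rw [← Finset.HasAntidiagonal.mem_antidiagonal.mp hx]
  exact (hf x.1).mul hvp_mul (hg x.2)

lemma pow (hvp_one : vp 1 = 0) (hvp_mul : ∀ x y : F, x ≠ 0 → y ≠ 0 → vp (x * y) = vp x + vp y)
    (hvp_add : ∀ x y : F, x ≠ 0 → y ≠ 0 → x + y ≠ 0 → min (vp x) (vp y) ≤ vp (x + y))
    {f : PowerSeries F} (hf : IsXpDivPSeries p vp f) (k : ℕ) : IsXpDivPSeries p vp (f ^ k) := by
  induction k with
  | zero => simpa using one hvp_one
  | succ k ih => simpa [pow_succ] using ih.mul hvp_mul hvp_add hf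

lemma inv (hvp_one : vp 1 = 0) (hvp_mul : ∀ x y : F, x ≠ 0 → y ≠ 0 → vp (x * y) = vp x + vp y)
    (hvp_add : ∀ x y : F, x ≠ 0 → y ≠ 0 → x + y ≠ 0 → min (vp x) (vp y) ≤ vp (x + y))
    {f : PowerSeries F} (hf0 : constantCoeff f = 1) (hf : IsXpDivPSeries p vp f) :
    IsXpDivPSeries p vp f⁻¹ := by
  intro n
  induction n using Nat.strong_induction_on with
  | _ n ih =>
  rw [coeff_inv, hf0, inv_one]
  split_ifs with hn
  · exact hn ▸ IsXpDivPCoeff.one hvp_one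
  rw [neg_mul, one_mul]
  refine (IsXpDivPCoeff.sum hvp_add fun x hx => ?_).neg hvp_one hvp_mul
  split_ifs with hxn
  · rw [← Finset.HasAntidiagonal.mem_antidiagonal.mp hx]
    exact (hf x.1).mul hvp_mul (ih x.2 hxn)
  · exact IsXpDivPCoeff.zero n

end IsXpDivPSeries

lemma isXpDivPSeries_of_eq_mul_phiF_phiF (hvp_one : vp 1 = 0) (hvp_p : vp (p : F) = 1)
    (hvp_mul : ∀ x y : F, x ≠ 0 → y ≠ 0 → vp (x * y) = vp x + vp y)
    (hvp_add : ∀ x y : F, x ≠ 0 → y ≠ 0 → x + y ≠ 0 → min (vp x) (vp y) ≤ vp (x + y))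
    (hp : 2 ≤ p) {e : ℕ} (hpe : p ∣ e) (hpe_le : p ≤ e) {f : PowerSeries F}
    (hf0 : constantCoeff f = 1)
    (hfeq : f = (1 + C (p : F)⁻¹ * X ^ e) * phiF p (phiF p f)) :
    IsXpDivPSeries p vp f := by
  have hcoeff : ∀ n, coeff n f = coeff n (phiF p (phiF p f)) +
      (p : F)⁻¹ * (if e ≤ n then coeff (n - e) (phiF p (phiF p f)) else 0) := fun n => by
    conv_lhs => rw [hfeq]
    rw [add_mul, one_mul, map_add, mul_assoc, coeff_C_mul, coeff_X_pow_mul']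
  intro n
  induction n using Nat.strong_induction_on with
  | _ n ih =>
  rcases Nat.eq_zero_or_pos n with rfl | hn
  · rw [coeff_zero_eq_constantCoeff_apply, hf0]
    exact IsXpDivPCoeff.one hvp_one
  have hphi : ∀ k ≤ n, IsXpDivPCoeff p vp k (coeff k (phiF p (phiF p f))) :=
    fun k hk => IsXpDivPCoeff.coeff_phiF_phiF fun m hm => ih m <| by
      have := Nat.mul_le_mul (Nat.mul_le_mul_left m hp) hp
      omega
  rw [hcoeff n]
  refine (hphi n le_rfl).add hvp_add ?_
  split_ifs with hen
  · have := (hphi (n - e) (Nat.sub_le n e)).inv_natCast_mul hvp_one hvp_p hvp_mul hpe hpe_le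
    rwa [Nat.sub_add_cancel hen] at this
  · rw [mul_zero]
    exact IsXpDivPCoeff.zero n

lemma IsXpDivPCoeff.vp_mul_pos (hvp_mul : ∀ x y : F, x ≠ 0 → y ≠ 0 → vp (x * y) = vp x + vp y)
    (hp : 0 < p) {h i : ℕ} (hi : i ≤ h) {a x : F} (ha : ((h / p : ℕ) : ℝ) < vp a)
    (hx : IsXpDivPCoeff p vp i x) (hax : a * x ≠ 0) : 0 < vp (a * x) := by
  obtain ⟨⟨k, rfl⟩, hxv⟩ := hx (right_ne_zero_of_mul hax)
  have hk : ((p * k : ℕ) : ℝ) / p = k := by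
    push_cast
    field_simp
  have hkh : (k : ℝ) ≤ ((h / p : ℕ) : ℝ) := by
    exact_mod_cast (Nat.le_div_iff_mul_le hp).mpr (by rw [mul_comm]; exact hi)
  rw [hvp_mul a x (left_ne_zero_of_mul hax) (right_ne_zero_of_mul hax)]
  linarith

end SeriesInXpDivP

theorem stmt_9_general {F : Type*} [Field F] (p : ℕ) (hp : p.Prime)
    (vp : F → ℝ) (hvp_one : vp 1 = 0) (hvp_p : vp (p : F) = 1)
    (hvp_mul : ∀ x y : F, x ≠ 0 → y ≠ 0 → vp (x * y) = vp x + vp y)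
    (hvp_add : ∀ x y : F, x ≠ 0 → y ≠ 0 → x + y ≠ 0 → min (vp x) (vp y) ≤ vp (x + y))
    (h : ℕ) (ap : F) (hap : ((h / p : ℕ) : ℝ) < vp ap)
    (lamM lamPP : PowerSeries F)
    (hM0 : PowerSeries.constantCoeff lamM = 1)
    (hMeq : lamM = (1 + PowerSeries.C (p : F)⁻¹ * PowerSeries.X ^ p) *
      phiF p (phiF p lamM))
    (hPP0 : PowerSeries.constantCoeff lamPP = 1)
    (hPPeq : lamPP = (1 + PowerSeries.C (p : F)⁻¹ * PowerSeries.X ^ (p ^ 2)) *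
      phiF p (phiF p lamPP)) :
    ∀ i : ℕ, i ≤ h →
      (PowerSeries.coeff i) (PowerSeries.C ap * (lamM * lamPP⁻¹) ^ h) ≠ 0 →
      0 < vp ((PowerSeries.coeff i) (PowerSeries.C ap * (lamM * lamPP⁻¹) ^ h)) := by
  have hM := isXpDivPSeries_of_eq_mul_phiF_phiF hvp_one hvp_p hvp_mul hvp_add hp.two_le
    (dvd_refl p) le_rfl hM0 hMeq
  have hPP := isXpDivPSeries_of_eq_mul_phiF_phiF hvp_one hvp_p hvp_mul hvp_add hp.two_le
    (dvd_pow_self p two_ne_zero) (Nat.le_self_pow two_ne_zero p) hPP0 hPPeq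
  have hquot : IsXpDivPSeries p vp ((lamM * lamPP⁻¹) ^ h) :=
    (hM.mul hvp_mul hvp_add (hPP.inv hvp_one hvp_mul hvp_add hPP0)).pow hvp_one hvp_mul hvp_add h
  intro i hi hne
  rw [coeff_C_mul] at hne ⊢
  exact (hquot i).vp_mul_pos hvp_mul hp.pos hi hap hne

/-- if `v_p(a_p) > ⌊h/p⌋` then the degree ≤ h truncation of
`a_p (λ_- / λ_{++})^h` lies in `m_F[u]`. -/
theorem stmt_9 {F : Type*} [Field F] (p : ℕ) (hp : p.Prime)
    (vp : F → ℝ) (hvp_one : vp 1 = 0) (hvp_p : vp (p : F) = 1)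
    (hvp_mul : ∀ x y : F, x ≠ 0 → y ≠ 0 → vp (x * y) = vp x + vp y)
    (hvp_add : ∀ x y : F, x ≠ 0 → y ≠ 0 → x + y ≠ 0 → min (vp x) (vp y) ≤ vp (x + y))
    (hvp_nat : ∀ n : ℕ, (n : F) ≠ 0 → 0 ≤ vp (n : F))
    (h : ℕ) (hh : 1 ≤ h) (ap : F) (hap : ((h / p : ℕ) : ℝ) < vp ap)
    (lamM lamPP : PowerSeries F)
    (hM0 : PowerSeries.constantCoeff lamM = 1)
    (hMeq : lamM = (1 + PowerSeries.C (p : F)⁻¹ * PowerSeries.X ^ p) *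
      phiF p (phiF p lamM))
    (hPP0 : PowerSeries.constantCoeff lamPP = 1)
    (hPPeq : lamPP = (1 + PowerSeries.C (p : F)⁻¹ * PowerSeries.X ^ (p ^ 2)) *
      phiF p (phiF p lamPP)) :
    ∀ i : ℕ, i ≤ h →
      (PowerSeries.coeff i) (PowerSeries.C ap * (lamM * lamPP⁻¹) ^ h) ≠ 0 →
      0 < vp ((PowerSeries.coeff i) (PowerSeries.C ap * (lamM * lamPP⁻¹) ^ h)) :=
  stmt_9_general p hp vp hvp_one hvp_p hvp_mul hvp_add h ap hap lamM lamPP hM0 hMeq hPP0 hPPeq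
end
end

section
/- (Matrix estimate for a scaling operation.) With R, v_R, H_v, φ as above, fix nonnegative integers r,s and rationals r',s' with r'+s' = r+s, and let D ∈ M_2(R) have entries in [[H_{r'+γ}, H_{r+γ}],[H_{s+γ}, H_{s'+γ}]] with γ > 0. If g ∈ H_{γ'} ∩ uR with γ' > 0, then [[1-g,0],[0,1]] D φ([[1-g,0],[0,1]])^{-1} - D has (1,1)-entry in H_{r'+γ+γ'}, (1,2)-entry in H_{r+γ+γ'}, (2,1)-entry in H_{s+γ+γ'+p-1}, and (2,2)-entry equal to 0. -/
open PowerSeries Filter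

noncomputable section

/-!
Coefficientwise, the ultrametric and multiplicative properties of `vp` make each `H_v` an additive
group with `H_v * H_w ⊆ H_{v+w}`. Writing `(1 - φ(g))⁻¹ = 1 + e`, the difference is
`[[D₁₁ (e - g - g e), -D₁₂ g], [D₂₁ e, 0]]`, so everything reduces to `e ∈ H_{γ'+p-1}`.
As `g` has no constant term, `φ(g) ∈ H_{γ'+p-1}`; and `e = φ(g) e + φ(g)` expresses each
coefficient of `e` through lower ones, so the bound follows by strong induction on the degree.
-/

section Ultrametric

variable {F : Type*} [Field F] {w : F → ℝ}
  (hw : ∀ x y : F, x ≠ 0 → y ≠ 0 → x + y ≠ 0 → min (w x) (w y) ≤ w (x + y))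
include hw

theorem le_apply_add {c : ℝ} {a b : F} (ha : a ≠ 0 → c ≤ w a) (hb : b ≠ 0 → c ≤ w b) :
    a + b ≠ 0 → c ≤ w (a + b) := by
  intro hab
  rcases eq_or_ne a 0 with rfl | ha0
  · simpa using hb (by simpa using hab)
  rcases eq_or_ne b 0 with rfl | hb0
  · simpa using ha ha0
  exact (le_min (ha ha0) (hb hb0)).trans (hw a b ha0 hb0 hab)

theorem le_apply_sum {ι : Type*} {c : ℝ} (t : Finset ι) (f : ι → F)
    (h : ∀ i ∈ t, f i ≠ 0 → c ≤ w (f i)) : (∑ i ∈ t, f i) ≠ 0 → c ≤ w (∑ i ∈ t, f i) :=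
  Finset.sum_induction f (fun x => x ≠ 0 → c ≤ w x) (fun _ _ => le_apply_add hw)
    (fun h0 => absurd rfl h0) h

theorem ultrametric_const_mul {c : ℝ} (hc : 0 ≤ c) (x y : F) (hx : x ≠ 0) (hy : y ≠ 0)
    (hxy : x + y ≠ 0) : min (c * w x) (c * w y) ≤ c * w (x + y) := by
  rw [← mul_min_of_nonneg _ _ hc]
  exact mul_le_mul_of_nonneg_left (hw x y hx hy hxy) hc

end Ultrametric

theorem coeff_mul_trunc_of_constantCoeff_eq_zero {R : Type*} [CommRing R] {G : PowerSeries R}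
    (hG : constantCoeff G = 0) (f : PowerSeries R) (n : ℕ) :
    coeff n (G * (trunc n f : PowerSeries R)) = coeff n (G * f) := by
  simp only [coeff_mul]
  refine Finset.sum_congr rfl fun x hx => ?_
  rcases Nat.eq_zero_or_pos x.1 with h0 | hpos
  · simp [h0, hG]
  · rw [coeff_coe_trunc_of_lt (by rw [Finset.HasAntidiagonal.mem_antidiagonal] at hx; omega)]

section Multiplicative

variable {F : Type*} [Field F] {vp : F → ℝ}
  (hvp_mul : ∀ x y : F, x ≠ 0 → y ≠ 0 → vp (x * y) = vp x + vp y)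
include hvp_mul

theorem vp_one : vp 1 = 0 := by
  simpa using hvp_mul 1 1 one_ne_zero one_ne_zero

theorem vp_neg {x : F} (hx : x ≠ 0) : vp (-x) = vp x := by
  have h1 := hvp_mul (-1) (-1) (by simp) (by simp)
  have h2 := hvp_mul (-1) x (by simp) hx
  rw [neg_mul_neg, one_mul, vp_one hvp_mul] at h1
  rw [neg_one_mul] at h2
  linarith

end Multiplicative

namespace Hge

variable {F : Type*} [Field F] {m : ℝ} {vp : F → ℝ} {v w : ℝ} {f g : PowerSeries F}

theorem iff_sub_le : Hge m vp v f ↔ ∀ n, coeff n f ≠ 0 → v - n ≤ m * vp (coeff n f) := by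
  simp only [Hge, sub_le_iff_le_add']

theorem mono (hvw : v ≤ w) (hf : Hge m vp w f) : Hge m vp v f :=
  fun n hn => hvw.trans (hf n hn)

theorem trunc_of_forall_lt {N : ℕ}
    (hf : ∀ n < N, coeff n f ≠ 0 → v ≤ n + m * vp (coeff n f)) :
    Hge m vp v (trunc N f : PowerSeries F) := by
  intro n hn
  rw [Polynomial.coeff_coe, coeff_trunc] at hn ⊢
  split_ifs at hn ⊢ with h
  · exact hf n h hn
  · exact absurd rfl hn

theorem neg (hvp_mul : ∀ x y : F, x ≠ 0 → y ≠ 0 → vp (x * y) = vp x + vp y)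
    (hf : Hge m vp v f) : Hge m vp v (-f) := by
  intro n hn
  rw [map_neg, neg_ne_zero] at hn
  rw [map_neg, vp_neg hvp_mul hn]
  exact hf n hn

theorem add (hm : 0 ≤ m)
    (hvp_add : ∀ x y : F, x ≠ 0 → y ≠ 0 → x + y ≠ 0 → min (vp x) (vp y) ≤ vp (x + y))
    (hf : Hge m vp v f) (hg : Hge m vp v g) : Hge m vp v (f + g) := by
  rw [iff_sub_le] at *
  intro n
  rw [map_add]
  exact le_apply_add (ultrametric_const_mul hvp_add hm) (hf n) (hg n)

theorem sub (hm : 0 ≤ m)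
    (hvp_mul : ∀ x y : F, x ≠ 0 → y ≠ 0 → vp (x * y) = vp x + vp y)
    (hvp_add : ∀ x y : F, x ≠ 0 → y ≠ 0 → x + y ≠ 0 → min (vp x) (vp y) ≤ vp (x + y))
    (hf : Hge m vp v f) (hg : Hge m vp v g) : Hge m vp v (f - g) := by
  rw [sub_eq_add_neg]
  exact hf.add hm hvp_add (hg.neg hvp_mul)

theorem mul (hm : 0 ≤ m)
    (hvp_mul : ∀ x y : F, x ≠ 0 → y ≠ 0 → vp (x * y) = vp x + vp y)
    (hvp_add : ∀ x y : F, x ≠ 0 → y ≠ 0 → x + y ≠ 0 → min (vp x) (vp y) ≤ vp (x + y))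
    (hf : Hge m vp v f) (hg : Hge m vp w g) : Hge m vp (v + w) (f * g) := by
  rw [iff_sub_le] at *
  intro n
  rw [coeff_mul]
  refine le_apply_sum (ultrametric_const_mul hvp_add hm) _ _ fun x hx hne => ?_
  obtain ⟨h1, h2⟩ := mul_ne_zero_iff.mp hne
  have hsum : (x.1 : ℝ) + x.2 = n := by
    exact_mod_cast Finset.HasAntidiagonal.mem_antidiagonal.mp hx
  rw [hvp_mul _ _ h1 h2, mul_add]
  linarith [hf _ h1, hg _ h2]

theorem phiF (p : ℕ) (hf : Hge m vp v f) (hf0 : constantCoeff f = 0) :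
    Hge m vp (v + (p - 1)) (phiF p f) := by
  intro n hn
  simp only [_root_.phiF, coeff_mk] at hn ⊢
  split_ifs at hn ⊢ with hd
  · have hk : 1 ≤ n / p := Nat.one_le_iff_ne_zero.mpr fun h => hn (by
      rw [h, coeff_zero_eq_constantCoeff, hf0])
    have hp : 1 ≤ p := Nat.one_le_iff_ne_zero.mpr fun h => by simp [h] at hk
    have hn' : (n : ℝ) = p * (n / p : ℕ) := by exact_mod_cast (Nat.mul_div_cancel' hd).symm
    have hpR : (1 : ℝ) ≤ p := by exact_mod_cast hp
    have hkR : (1 : ℝ) ≤ (n / p : ℕ) := by exact_mod_cast hk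
    rw [hn']
    nlinarith [hf _ hn, mul_nonneg (sub_nonneg.2 hpR) (sub_nonneg.2 hkR)]
  · exact absurd rfl hn

theorem inv_one_sub_sub_one (hm : 0 ≤ m)
    (hvp_mul : ∀ x y : F, x ≠ 0 → y ≠ 0 → vp (x * y) = vp x + vp y)
    (hvp_add : ∀ x y : F, x ≠ 0 → y ≠ 0 → x + y ≠ 0 → min (vp x) (vp y) ≤ vp (x + y))
    (hv : 0 ≤ v) (hg : Hge m vp v g) (hg0 : constantCoeff g = 0) :
    Hge m vp v ((1 - g)⁻¹ - 1) := by
  set e := (1 - g)⁻¹ - 1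
  have he : e = g * e + g := by
    linear_combination PowerSeries.mul_inv_cancel (1 - g) (by simp [hg0])
  intro n
  induction n using Nat.strong_induction_on with
  | _ n ih =>
    have htrunc : Hge m vp v (trunc n e : PowerSeries F) := trunc_of_forall_lt ih
    have hcoeff : coeff n e = coeff n (g * (trunc n e : PowerSeries F) + g) := by
      rw [map_add, coeff_mul_trunc_of_constantCoeff_eq_zero hg0, ← map_add, ← he]
    rw [hcoeff]
    exact (((hg.mul hm hvp_mul hvp_add htrunc).mono (by linarith)).add hm hvp_add hg) n

end Hge

theorem constantCoeff_phiF {F : Type*} [Field F] (p : ℕ) (f : PowerSeries F) :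
    constantCoeff (phiF p f) = constantCoeff f := by
  simp [← coeff_zero_eq_constantCoeff, phiF]

theorem diagonal_mul_mul_diagonal_sub {R : Type*} [CommRing R] (g e : R)
    (D : Matrix (Fin 2) (Fin 2) R) :
    !![1 - g, 0; 0, 1] * D * !![1 + e, 0; 0, 1] - D =
      !![D 0 0 * (e - g - g * e), D 0 1 * -g; D 1 0 * e, 0] := by
  rw [Matrix.eta_fin_two D, Matrix.mul_fin_two, Matrix.mul_fin_two]
  ext i j
  fin_cases i <;> fin_cases j <;> simp <;> ring

theorem stmt_13_general {F : Type*} [Field F] (p : ℕ) (hp : p.Prime) (m : ℝ) (hm : 1 < m)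
    (vp : F → ℝ)
    (hvp_mul : ∀ x y : F, x ≠ 0 → y ≠ 0 → vp (x * y) = vp x + vp y)
    (hvp_add : ∀ x y : F, x ≠ 0 → y ≠ 0 → x + y ≠ 0 → min (vp x) (vp y) ≤ vp (x + y))
    (r s : ℕ) (r' : ℝ)
    (γ γ' : ℝ) (hγ' : 0 < γ')
    (D : Matrix (Fin 2) (Fin 2) (PowerSeries F))
    (hD11 : Hge m vp (r' + γ) (D 0 0)) (hD12 : Hge m vp ((r : ℝ) + γ) (D 0 1))
    (hD21 : Hge m vp ((s : ℝ) + γ) (D 1 0))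
    (g : PowerSeries F) (hg : Hge m vp γ' g)
    (hgd : (PowerSeries.X : PowerSeries F) ∣ g) :
    let M := (!![1 - g, 0; 0, 1] : Matrix (Fin 2) (Fin 2) (PowerSeries F)) * D *
      !![(1 - phiF p g)⁻¹, 0; 0, 1]
    Hge m vp (r' + γ + γ') ((M - D) 0 0) ∧
      Hge m vp ((r : ℝ) + γ + γ') ((M - D) 0 1) ∧
      Hge m vp ((s : ℝ) + γ + γ' + ((p : ℝ) - 1)) ((M - D) 1 0) ∧
      (M - D) 1 1 = 0 := by
  intro M
  have hm0 : 0 ≤ m := by linarith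
  have hp1 : (1 : ℝ) ≤ p := by exact_mod_cast hp.one_lt.le
  have hg0 : constantCoeff g = 0 := X_dvd_iff.mp hgd
  set e := (1 - phiF p g)⁻¹ - 1
  have he : Hge m vp (γ' + (p - 1)) e :=
    (hg.phiF p hg0).inv_one_sub_sub_one hm0 hvp_mul hvp_add (by linarith)
      (by rw [constantCoeff_phiF, hg0])
  have he' : Hge m vp γ' e := he.mono (by linarith)
  have hMD : M - D = !![D 0 0 * (e - g - g * e), D 0 1 * -g; D 1 0 * e, 0] := by
    rw [← diagonal_mul_mul_diagonal_sub, add_sub_cancel]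
  rw [hMD]
  refine ⟨?_, hD12.mul hm0 hvp_mul hvp_add (hg.neg hvp_mul), ?_, rfl⟩
  · have hgee : Hge m vp γ' (g * e) := (hg.mul hm0 hvp_mul hvp_add he').mono (by linarith)
    exact hD11.mul hm0 hvp_mul hvp_add
      ((he'.sub hm0 hvp_mul hvp_add hg).sub hm0 hvp_mul hvp_add hgee)
  · exact (hD21.mul hm0 hvp_mul hvp_add he).mono (by linarith)

/-- matrix estimate for the scaling operation `D ↦ A D φ(A)⁻¹`
with `A = [[1-g,0],[0,1]]`, so `φ(A)⁻¹ = [[(1-φ(g))⁻¹,0],[0,1]]`. -/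
theorem stmt_13 {F : Type*} [Field F] (p : ℕ) (hp : p.Prime) (m : ℝ) (hm : 1 < m)
    (vp : F → ℝ)
    (hvp_mul : ∀ x y : F, x ≠ 0 → y ≠ 0 → vp (x * y) = vp x + vp y)
    (hvp_add : ∀ x y : F, x ≠ 0 → y ≠ 0 → x + y ≠ 0 → min (vp x) (vp y) ≤ vp (x + y))
    (r s : ℕ) (r' s' : ℝ) (hsum : r' + s' = (r : ℝ) + s)
    (γ γ' : ℝ) (hγ : 0 < γ) (hγ' : 0 < γ')
    (D : Matrix (Fin 2) (Fin 2) (PowerSeries F))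
    (hD11 : Hge m vp (r' + γ) (D 0 0)) (hD12 : Hge m vp ((r : ℝ) + γ) (D 0 1))
    (hD21 : Hge m vp ((s : ℝ) + γ) (D 1 0)) (hD22 : Hge m vp (s' + γ) (D 1 1))
    (g : PowerSeries F) (hg : Hge m vp γ' g)
    (hgd : (PowerSeries.X : PowerSeries F) ∣ g) :
    let M := (!![1 - g, 0; 0, 1] : Matrix (Fin 2) (Fin 2) (PowerSeries F)) * D *
      !![(1 - phiF p g)⁻¹, 0; 0, 1]
    Hge m vp (r' + γ + γ') ((M - D) 0 0) ∧
      Hge m vp ((r : ℝ) + γ + γ') ((M - D) 0 1) ∧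
      Hge m vp ((s : ℝ) + γ + γ' + ((p : ℝ) - 1)) ((M - D) 1 0) ∧
      (M - D) 1 1 = 0 :=
  stmt_13_general p hp m hm vp hvp_mul hvp_add r s r' γ γ' hγ' D hD11 hD12 hD21 g hg hgd
end
end

section
/- Let M be a finite free module over O_F (power series over F convergent on the open unit disc) with an injective φ-semilinear endomorphism φ_M whose linearization has cokernel killed by E^h, where E = u + p. Let S ⊇ O_F[1/λ] be a φ- and N_∇-stable subring of (K_0⊗F)[[u]]. If N_1, N_2 : M ⊗ S → M ⊗ S are two differential operators over N_∇ = -uλ d/du such that N_i ≡ N_M mod u and N_i φ_M = p(E/c_0) φ_M N_i for i = 1,2, then N_1 = N_2. Equivalently, any S-linear endomorphism H of M⊗S with H(M⊗S) ⊆ u(M⊗S) and H φ_M = p(E/c_0) φ_M H is zero. -/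
/-!
If `H(M) ⊆ r • M`, the commutation relation gives `H(φM(M)) ⊆ φS(r) • M`; as `E^h • M` lies in
the span of `φM(M)` and `E^h` is a unit, this upgrades to `H(M) ⊆ φS(r) • M`. Starting from
`r = u` and iterating gives `H(M) ⊆ u^(p^i) • M` for all `i`, so `H = 0` by `u`-adic separatedness.
-/

open Pointwise

section
variable {S M : Type*} [CommRing S] [AddCommGroup M] [Module S M]

theorem Submodule.smul_le_smul_of_dvd {r s : S} (h : s ∣ r) (N : Submodule S M) :
    r • N ≤ s • N := by
  simp only [← Submodule.ideal_span_singleton_smul]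
  exact Submodule.smul_mono_left (Ideal.span_singleton_le_span_singleton.mpr h)

theorem LinearMap.range_le_smul_top_of_semiconj {φS : S →+* S} {φM : M →ₛₗ[φS] M}
    {H : M →ₗ[S] M} {a b e r : S} (ha : IsUnit a) (he : IsUnit e)
    (hspan : ∀ x : M, e • x ∈ Submodule.span S (Set.range φM))
    (hcomm : ∀ x : M, a • H (φM x) = b • φM (H x))
    (hr : LinearMap.range H ≤ r • ⊤) :
    LinearMap.range H ≤ φS r • ⊤ := by
  have hφ : Set.range φM ⊆ (φS r • ⊤ : Submodule S M).comap H := by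
    rintro _ ⟨y, rfl⟩
    obtain ⟨z, -, hz⟩ := (Submodule.mem_smul_pointwise_iff_exists _ _ _).mp
      (hr (LinearMap.mem_range_self H y))
    rw [SetLike.mem_coe, Submodule.mem_comap, ← Submodule.smul_mem_iff_of_isUnit _ ha, hcomm,
      ← hz, LinearMap.map_smulₛₗ]
    exact Submodule.smul_mem _ _ (Submodule.smul_mem_pointwise_smul _ _ ⊤ Submodule.mem_top)
  rintro _ ⟨x, rfl⟩
  rw [← Submodule.smul_mem_iff_of_isUnit _ he, ← map_smul]
  exact Submodule.span_le.mpr hφ (hspan x)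

theorem LinearMap.range_le_pow_pow_smul_top_of_semiconj {p : ℕ} {φS : S →+* S}
    {φM : M →ₛₗ[φS] M} {H : M →ₗ[S] M} {u a b e : S} (hφu : φS u = u ^ p) (ha : IsUnit a)
    (he : IsUnit e) (hspan : ∀ x : M, e • x ∈ Submodule.span S (Set.range φM))
    (hcomm : ∀ x : M, a • H (φM x) = b • φM (H x))
    (hu : LinearMap.range H ≤ u • ⊤) (i : ℕ) :
    LinearMap.range H ≤ u ^ p ^ i • ⊤ := by
  induction i with
  | zero => simpa using hu
  | succ i ih =>
    have := LinearMap.range_le_smul_top_of_semiconj ha he hspan hcomm ih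
    rwa [map_pow, hφu, ← pow_mul, ← pow_succ'] at this

end

/-- uniqueness of the monodromy operator, in its equivalent form:
let `S` be a (commutative) ring with a Frobenius `φS` satisfying `φS u = u^p`,
`M` a module over `S` which is `u`-adically separated, equipped with a
`φS`-semilinear operator `φM` of height ≤ h (i.e. `E^h M` is contained in the
`S`-span of `φM(M)`) where `E` is a unit in `S`.  Then any `S`-linear
endomorphism `H` of `M` with `H(M) ⊆ uM` satisfying the commutation relation
`c₀ H φM = p E φM H` (i.e. `H φM = p(E/c₀) φM H`, with `c₀` a unit) is zero.
In particular two differential operators over `N_∇` lifting `N_M` and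
satisfying the commutation relation agree, their difference being such an `H`. -/
theorem stmt_14 {S M : Type*} [CommRing S] [AddCommGroup M] [Module S M]
    (p : ℕ) (hp : p.Prime) (φS : S →+* S) (u E c₀ : S)
    (hφu : φS u = u ^ p) (hE : IsUnit E) (hc₀ : IsUnit c₀) (h : ℕ)
    (φM : M →ₛₗ[φS] M)
    (hheight : ∀ x : M, E ^ h • x ∈ Submodule.span S (Set.range φM))
    (hsep : (⨅ i : ℕ, (Ideal.span {u ^ i} : Ideal S) • (⊤ : Submodule S M)) = ⊥)
    (H : M →ₗ[S] M)
    (hHu : LinearMap.range H ≤ (Ideal.span {u} : Ideal S) • (⊤ : Submodule S M))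
    (hcomm : ∀ x : M, c₀ • H (φM x) = ((p : S) * E) • φM (H x)) :
    H = 0 := by
  simp only [Submodule.ideal_span_singleton_smul] at hsep hHu
  have hpow := LinearMap.range_le_pow_pow_smul_top_of_semiconj hφu hc₀ (hE.pow h) hheight
    hcomm hHu
  rw [← LinearMap.range_eq_bot, eq_bot_iff, ← hsep]
  exact le_iInf fun i => (hpow i).trans <|
    Submodule.smul_le_smul_of_dvd (pow_dvd_pow u (Nat.lt_pow_self hp.one_lt).le) ⊤
end
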